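/- arXiv:2604.23548 — 3 statements merged into one kernel-verified Lean document; each statement's English description precedes it below -/
import Mathlib

section
/- Let A, B, B' be bounded linear operators with ‖A‖ ≤ ρ < 1 and ‖B' − B‖ ≤ δ. Then ‖B' − (I − A)⁻¹ B‖ ≤ ρ‖B‖/(1 − ρ) + δ. In particular, if B' = J_x T(z_k, x), B = J_x T(z⋆, x), z ↦ J_x T(z, x) is L_J-Lipschitz in operator norm, and ‖B‖ ≤ L_T, then the one-step Jacobian error satisfies ‖J_x T(z_k, x) − (I − A)⁻¹ B‖ ≤ ρ L_T/(1 − ρ) + L_J ‖z_k − z⋆‖. -/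
namespace ContinuousLinearMap

variable {𝕜 E F : Type*} [NontriviallyNormedField 𝕜]
  [SeminormedAddCommGroup E] [NormedSpace 𝕜 E] [SeminormedAddCommGroup F] [NormedSpace 𝕜 F]

theorem norm_comp_le_of_norm_le {A : F →L[𝕜] F} {ρ : ℝ} (hA : ‖A‖ ≤ ρ) (J : E →L[𝕜] F) :
    ‖A.comp J‖ ≤ ρ * ‖J‖ :=
  (opNorm_comp_le A J).trans (mul_le_mul_of_nonneg_right hA (norm_nonneg J))

theorem one_sub_comp_eq_sub (A : F →L[𝕜] F) (J : E →L[𝕜] F) :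
    (1 - A).comp J = J - A.comp J := by
  rw [sub_comp, one_def, id_comp]

theorem sub_mul_norm_le_norm_one_sub_comp {A : F →L[𝕜] F} {ρ : ℝ} (hA : ‖A‖ ≤ ρ)
    (J : E →L[𝕜] F) : (1 - ρ) * ‖J‖ ≤ ‖(1 - A).comp J‖ := by
  have h : ‖J‖ ≤ ‖(1 - A).comp J‖ + ‖A.comp J‖ := by
    rw [one_sub_comp_eq_sub]
    simpa only [sub_add_cancel] using norm_add_le (J - A.comp J) (A.comp J)
  linarith [norm_comp_le_of_norm_le hA J]

/-- A Neumann-series bound `‖(1 - A)⁻¹ B‖ ≤ ‖B‖ / (1 - ρ)`, phrased without inverses: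
`J` is any solution of `(1 - A) J = B`. -/
theorem norm_le_norm_one_sub_comp_div {A : F →L[𝕜] F} {ρ : ℝ} (hA : ‖A‖ ≤ ρ) (hρ : ρ < 1)
    (J : E →L[𝕜] F) : ‖J‖ ≤ ‖(1 - A).comp J‖ / (1 - ρ) := by
  rw [le_div_iff₀ (sub_pos.mpr hρ), mul_comm]
  exact sub_mul_norm_le_norm_one_sub_comp hA J

end ContinuousLinearMap

open ContinuousLinearMap in
theorem stmt_5 {E F : Type*} [NormedAddCommGroup E] [NormedSpace ℝ E]
    [NormedAddCommGroup F] [NormedSpace ℝ F]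
    (A : F →L[ℝ] F) (B B' : E →L[ℝ] F) (ρ δ : ℝ)
    (hA : ‖A‖ ≤ ρ) (hρ : ρ < 1) (hBB : ‖B' - B‖ ≤ δ)
    (J : E →L[ℝ] F) (hJ : (1 - A).comp J = B) :
    ‖B' - J‖ ≤ ρ * ‖B‖ / (1 - ρ) + δ := by
  have hρ0 : 0 ≤ ρ := (norm_nonneg A).trans hA
  have hJB : ‖J‖ ≤ ‖B‖ / (1 - ρ) := hJ ▸ norm_le_norm_one_sub_comp_div hA hρ J
  have hsplit : B' - J = (B' - B) - A.comp J := by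
    rw [← hJ, one_sub_comp_eq_sub]; abel
  calc ‖B' - J‖ ≤ ‖B' - B‖ + ‖A.comp J‖ := hsplit ▸ norm_sub_le _ _
    _ ≤ δ + ρ * ‖J‖ := add_le_add hBB (norm_comp_le_of_norm_le hA J)
    _ ≤ δ + ρ * (‖B‖ / (1 - ρ)) := by gcongr
    _ = ρ * ‖B‖ / (1 - ρ) + δ := by rw [mul_div_assoc, add_comm]
end

section
/- Assume: (i) a ρ-contractive fixed-point iteration z_{k+1} = T(z_k) with fixed point z⋆ and d₀ = ‖z₀ − z⋆‖; (ii) maps a(z), b(z) that are L_x- and L_z-Lipschitz in z respectively, with ‖b(z)‖ ≤ C_z for all z; (iii) Jacobians J(z) with ‖J(z) − J⋆‖ ≤ ρL_T/(1−ρ) + L_J‖z_{prev} − z⋆‖ where z = T(z_{prev}), and ‖J⋆‖ ≤ σ_J. Then for v(z) = a(z) + b(z)∘J(z) and v⋆ = a(z⋆) + b(z⋆)∘J⋆, one has ‖v(z_{k+1}) − v⋆‖ ≤ ρL_T C_z/(1−ρ) + ρ^k d₀ (ρ(L_x + L_z σ_J) + C_z L_J). -/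
theorem norm_sub_le_pow_mul_of_norm_map_sub_le {E : Type*} [SeminormedAddCommGroup E]
    {T : E → E} {ρ : ℝ} (hρ0 : 0 ≤ ρ) {zstar : E}
    (hT : ∀ x, ‖T x - zstar‖ ≤ ρ * ‖x - zstar‖) {z : ℕ → E} (hrec : ∀ k, z (k + 1) = T (z k)) :
    ∀ k, ‖z k - zstar‖ ≤ ρ ^ k * ‖z 0 - zstar‖
  | 0 => by simp
  | k + 1 =>
    calc ‖z (k + 1) - zstar‖ ≤ ρ * ‖z k - zstar‖ := hrec k ▸ hT (z k)
      _ ≤ ρ * (ρ ^ k * ‖z 0 - zstar‖) := by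
        gcongr; exact norm_sub_le_pow_mul_of_norm_map_sub_le hρ0 hT hrec k
      _ = ρ ^ (k + 1) * ‖z 0 - zstar‖ := by ring

namespace ContinuousLinearMap

variable {𝕜 X Y Z : Type*} [NontriviallyNormedField 𝕜]
  [SeminormedAddCommGroup X] [NormedSpace 𝕜 X] [SeminormedAddCommGroup Y] [NormedSpace 𝕜 Y]
  [SeminormedAddCommGroup Z] [NormedSpace 𝕜 Z]

theorem add_comp_sub_add_comp (A A' : X →L[𝕜] Z) (B B' : Y →L[𝕜] Z) (J J' : X →L[𝕜] Y) :
    (A + B.comp J) - (A' + B'.comp J') = (A - A') + ((B - B').comp J' + B.comp (J - J')) := by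
  rw [sub_comp, comp_sub]
  abel

theorem norm_add_comp_sub_add_comp_le (A A' : X →L[𝕜] Z) (B B' : Y →L[𝕜] Z)
    (J J' : X →L[𝕜] Y) :
    ‖(A + B.comp J) - (A' + B'.comp J')‖ ≤ ‖A - A'‖ + ‖B - B'‖ * ‖J'‖ + ‖B‖ * ‖J - J'‖ :=
  calc ‖(A + B.comp J) - (A' + B'.comp J')‖
      ≤ ‖A - A'‖ + (‖(B - B').comp J'‖ + ‖B.comp (J - J')‖) := by
        rw [add_comp_sub_add_comp]
        exact (norm_add_le _ _).trans (by gcongr; exact norm_add_le _ _)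
    _ ≤ ‖A - A'‖ + (‖B - B'‖ * ‖J'‖ + ‖B‖ * ‖J - J'‖) := by
        gcongr <;> exact opNorm_comp_le _ _
    _ = ‖A - A'‖ + ‖B - B'‖ * ‖J'‖ + ‖B‖ * ‖J - J'‖ := by ring

end ContinuousLinearMap

theorem stmt_10_general {E X : Type*} [NormedAddCommGroup E] [NormedSpace ℝ E]
    [NormedAddCommGroup X] [NormedSpace ℝ X]
    (T : E → E) (ρ : ℝ) (hρ0 : 0 ≤ ρ)
    (hlip : ∀ x y, ‖T x - T y‖ ≤ ρ * ‖x - y‖)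
    (zstar : E) (hfix : T zstar = zstar)
    (z : ℕ → E) (hrec : ∀ k, z (k + 1) = T (z k))
    (d0 : ℝ) (hd0 : d0 = ‖z 0 - zstar‖)
    (a : E → X →L[ℝ] ℝ) (b : E → E →L[ℝ] ℝ) (J : E → X →L[ℝ] E) (Jstar : X →L[ℝ] E)
    (L_x L_z C_z L_T L_J σ_J : ℝ)
    (hLx0 : 0 ≤ L_x) (hLz0 : 0 ≤ L_z) (hCz0 : 0 ≤ C_z)
    (hLJ0 : 0 ≤ L_J)
    (ha : ∀ w w', ‖a w - a w'‖ ≤ L_x * ‖w - w'‖)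
    (hb : ∀ w w', ‖b w - b w'‖ ≤ L_z * ‖w - w'‖)
    (hbbd : ∀ w, ‖b w‖ ≤ C_z)
    (hJ : ∀ w, ‖J (T w) - Jstar‖ ≤ ρ * L_T / (1 - ρ) + L_J * ‖w - zstar‖)
    (hJstar : ‖Jstar‖ ≤ σ_J) :
    ∀ k, ‖(a (z (k + 1)) + (b (z (k + 1))).comp (J (z (k + 1)))) -
        (a zstar + (b zstar).comp Jstar)‖ ≤
      ρ * L_T * C_z / (1 - ρ) + ρ ^ k * d0 * (ρ * (L_x + L_z * σ_J) + C_z * L_J) := by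
  intro k
  have hgeo : ∀ n, ‖z n - zstar‖ ≤ ρ ^ n * d0 := hd0 ▸
    norm_sub_le_pow_mul_of_norm_map_sub_le hρ0 (fun x ↦ by simpa only [hfix] using hlip x zstar) hrec
  have hJk : ‖J (z (k + 1)) - Jstar‖ ≤ ρ * L_T / (1 - ρ) + L_J * (ρ ^ k * d0) :=
    hrec k ▸ (hJ (z k)).trans (by gcongr; exact hgeo k)
  calc _ ≤ ‖a (z (k + 1)) - a zstar‖ + ‖b (z (k + 1)) - b zstar‖ * ‖Jstar‖
          + ‖b (z (k + 1))‖ * ‖J (z (k + 1)) - Jstar‖ :=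
        ContinuousLinearMap.norm_add_comp_sub_add_comp_le _ _ _ _ _ _
    _ ≤ L_x * (ρ ^ (k + 1) * d0) + L_z * (ρ ^ (k + 1) * d0) * σ_J
          + C_z * (ρ * L_T / (1 - ρ) + L_J * (ρ ^ k * d0)) := by
        have hd0pos : 0 ≤ d0 := hd0 ▸ norm_nonneg _
        gcongr
        · exact (ha _ _).trans (by gcongr; exact hgeo _)
        · exact (hb _ _).trans (by gcongr; exact hgeo _)
        · exact hbbd _
    _ = _ := by ring

theorem stmt_10 {E X : Type*} [NormedAddCommGroup E] [NormedSpace ℝ E]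
    [NormedAddCommGroup X] [NormedSpace ℝ X]
    (T : E → E) (ρ : ℝ) (hρ0 : 0 ≤ ρ) (hρ1 : ρ < 1)
    (hlip : ∀ x y, ‖T x - T y‖ ≤ ρ * ‖x - y‖)
    (zstar : E) (hfix : T zstar = zstar)
    (z : ℕ → E) (hrec : ∀ k, z (k + 1) = T (z k))
    (d0 : ℝ) (hd0 : d0 = ‖z 0 - zstar‖)
    (a : E → X →L[ℝ] ℝ) (b : E → E →L[ℝ] ℝ) (J : E → X →L[ℝ] E) (Jstar : X →L[ℝ] E)
    (L_x L_z C_z L_T L_J σ_J : ℝ)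
    (hLx0 : 0 ≤ L_x) (hLz0 : 0 ≤ L_z) (hCz0 : 0 ≤ C_z) (hLT0 : 0 ≤ L_T)
    (hLJ0 : 0 ≤ L_J) (hσJ0 : 0 ≤ σ_J)
    (ha : ∀ w w', ‖a w - a w'‖ ≤ L_x * ‖w - w'‖)
    (hb : ∀ w w', ‖b w - b w'‖ ≤ L_z * ‖w - w'‖)
    (hbbd : ∀ w, ‖b w‖ ≤ C_z)
    (hJ : ∀ w, ‖J (T w) - Jstar‖ ≤ ρ * L_T / (1 - ρ) + L_J * ‖w - zstar‖)
    (hJstar : ‖Jstar‖ ≤ σ_J) :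
    ∀ k, ‖(a (z (k + 1)) + (b (z (k + 1))).comp (J (z (k + 1)))) -
        (a zstar + (b zstar).comp Jstar)‖ ≤
      ρ * L_T * C_z / (1 - ρ) + ρ ^ k * d0 * (ρ * (L_x + L_z * σ_J) + C_z * L_J) :=
  stmt_10_general T ρ hρ0 hlip zstar hfix z hrec d0 hd0 a b J Jstar L_x L_z C_z L_T L_J σ_J hLx0
    hLz0 hCz0 hLJ0 ha hb hbbd hJ hJstar
end

section
/- Under the hypotheses of the previous bound, additionally suppose ‖A‖ ≤ σ_A for a linear map A, and that g⋆ = v⋆∘A satisfies ‖g⋆‖ ≥ C_g > 0. Define ε_k = (σ_A/C_g)(ρL_T C_z/(1−ρ) + ρ^k d₀ C₁) with C₁ = ρ(L_x + L_z σ_J) + C_z L_J. If ε_k < 1, then the cosine of the angle between g⋆ and ĝ = v(z_{k+1})∘A satisfies cos(g⋆, ĝ) ≥ (1 − ε_k)/(1 + ε_k) > 0. -/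
open scoped RealInnerProductSpace

/-!
The error of the one-step gradient splits as `ĝ - g⋆ = A†(Δv)`, and `Δv` is controlled by the
Lipschitz constants of `a`, `b` and the Jacobian error at the current iterate, which decays
geometrically along the contraction. Relative to `‖g⋆‖ ≥ C_g` this gives
`‖ĝ - g⋆‖ ≤ ε ‖g⋆‖`, and a relative perturbation of size `ε < 1` moves the cosine by at most
`(1 - ε) / (1 + ε)`: `⟪g⋆, ĝ⟫ ≥ (1 - ε) ‖g⋆‖²` while `‖ĝ‖ ≤ (1 + ε) ‖g⋆‖`.
-/

lemma norm_sub_fixedPoint_le_pow_mul {E : Type*} [SeminormedAddCommGroup E] {T : E → E}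
    {ρ : ℝ} (hρ : 0 ≤ ρ) (hT : ∀ x y, ‖T x - T y‖ ≤ ρ * ‖x - y‖) {zstar : E}
    (hfix : T zstar = zstar) {z : ℕ → E} (hrec : ∀ n, z (n + 1) = T (z n)) (n : ℕ) :
    ‖z n - zstar‖ ≤ ρ ^ n * ‖z 0 - zstar‖ := by
  induction n with
  | zero => simp
  | succ n ih =>
    calc ‖z (n + 1) - zstar‖ = ‖T (z n) - T zstar‖ := by rw [hrec, hfix]
      _ ≤ ρ * ‖z n - zstar‖ := hT _ _
      _ ≤ ρ * (ρ ^ n * ‖z 0 - zstar‖) := by gcongr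
      _ = ρ ^ (n + 1) * ‖z 0 - zstar‖ := by ring

section Adjoint

variable {E X : Type*}
  [NormedAddCommGroup E] [InnerProductSpace ℝ E] [CompleteSpace E]
  [NormedAddCommGroup X] [InnerProductSpace ℝ X] [CompleteSpace X]

lemma ContinuousLinearMap.norm_adjoint_apply_le (B : X →L[ℝ] E) (x : E) :
    ‖B.adjoint x‖ ≤ ‖B‖ * ‖x‖ :=
  (B.adjoint.le_opNorm x).trans_eq (by rw [LinearIsometryEquiv.norm_map])

lemma norm_add_adjoint_sub_add_adjoint_le (a a' : X) (b b' : E) (J J' : X →L[ℝ] E) :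
    ‖(a + J.adjoint b) - (a' + J'.adjoint b')‖ ≤
      ‖a - a'‖ + ‖J'‖ * ‖b - b'‖ + ‖J - J'‖ * ‖b‖ := by
  have hsplit : (a + J.adjoint b) - (a' + J'.adjoint b') =
      (a - a') + J'.adjoint (b - b') + (J - J').adjoint b := by
    simp only [map_sub, sub_apply]
    abel
  rw [hsplit]
  refine (norm_add₃_le ..).trans ?_
  gcongr
  · exact J'.norm_adjoint_apply_le _
  · exact (J - J').norm_adjoint_apply_le _

/-- `β` plays the role of the Jacobian bias `ρ L_T / (1 - ρ)`. -/
lemma norm_add_adjoint_sub_le_of_contraction_step {T : E → E} {ρ : ℝ} (hρ0 : 0 ≤ ρ)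
    (hT : ∀ x y, ‖T x - T y‖ ≤ ρ * ‖x - y‖) {zstar : E} (hfix : T zstar = zstar)
    {a : E → X} {b : E → E} {J : E → X →L[ℝ] E} {Jstar : X →L[ℝ] E}
    {L_x L_z C_z β L_J σ_J : ℝ} (hLx0 : 0 ≤ L_x) (hLz0 : 0 ≤ L_z) (hLJ0 : 0 ≤ L_J)
    (ha : ∀ w w', ‖a w - a w'‖ ≤ L_x * ‖w - w'‖)
    (hb : ∀ w w', ‖b w - b w'‖ ≤ L_z * ‖w - w'‖)
    (hbbd : ∀ w, ‖b w‖ ≤ C_z)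
    (hJ : ∀ w, ‖J (T w) - Jstar‖ ≤ β + L_J * ‖w - zstar‖)
    (hJstar : ‖Jstar‖ ≤ σ_J) {w : E} {δ : ℝ} (hw : ‖w - zstar‖ ≤ δ) :
    ‖(a (T w) + (J (T w)).adjoint (b (T w))) - (a zstar + Jstar.adjoint (b zstar))‖ ≤
      β * C_z + δ * (ρ * (L_x + L_z * σ_J) + C_z * L_J) := by
  have hCz0 : 0 ≤ C_z := (norm_nonneg _).trans (hbbd zstar)
  have hstep : ‖T w - zstar‖ ≤ ρ * δ := by
    calc ‖T w - zstar‖ = ‖T w - T zstar‖ := by rw [hfix]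
      _ ≤ ρ * ‖w - zstar‖ := hT w zstar
      _ ≤ ρ * δ := by gcongr
  have hJw : ‖J (T w) - Jstar‖ ≤ β + L_J * δ := (hJ w).trans (by gcongr)
  calc _ ≤ ‖a (T w) - a zstar‖ + ‖Jstar‖ * ‖b (T w) - b zstar‖
        + ‖J (T w) - Jstar‖ * ‖b (T w)‖ := norm_add_adjoint_sub_add_adjoint_le ..
    _ ≤ L_x * (ρ * δ) + σ_J * (L_z * (ρ * δ)) + (β + L_J * δ) * C_z := by
      gcongr
      · exact (ha _ _).trans (by gcongr)
      · exact (norm_nonneg _).trans hJstar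
      · exact (hb _ _).trans (by gcongr)
      · exact (norm_nonneg _).trans hJw
      · exact hbbd _
    _ = β * C_z + δ * (ρ * (L_x + L_z * σ_J) + C_z * L_J) := by ring

end Adjoint

lemma cos_angle_ge_of_norm_sub_le {V : Type*} [NormedAddCommGroup V] [InnerProductSpace ℝ V]
    {x y : V} {ε : ℝ} (hx : x ≠ 0) (hε : ε < 1) (hxy : ‖y - x‖ ≤ ε * ‖x‖) :
    (1 - ε) / (1 + ε) ≤ Real.cos (InnerProductGeometry.angle x y) := by
  rw [InnerProductGeometry.cos_angle]
  have hx0 : 0 < ‖x‖ := norm_pos_iff.mpr hx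
  have hε0 : 0 ≤ ε := nonneg_of_mul_nonneg_left ((norm_nonneg _).trans hxy) hx0
  have hinner : (1 - ε) * ‖x‖ ^ 2 ≤ ⟪x, y⟫ := by
    have hsplit : ⟪x, y⟫ = ‖x‖ ^ 2 + ⟪x, y - x⟫ := by
      rw [inner_sub_right, real_inner_self_eq_norm_sq]; ring
    have hcs := neg_le_of_abs_le (abs_real_inner_le_norm x (y - x))
    nlinarith
  have hy : ‖y‖ ≤ (1 + ε) * ‖x‖ := by
    have := norm_le_norm_add_norm_sub' y x
    linarith
  have hy0 : 0 < ‖y‖ := by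
    have := norm_sub_norm_le x y
    rw [norm_sub_rev] at this
    nlinarith
  rw [div_le_div_iff₀ (by linarith) (by positivity)]
  nlinarith [mul_le_mul_of_nonneg_left hy (mul_pos (by linarith : 0 < 1 - ε) hx0).le]

theorem stmt_11_general {E X Φ : Type*}
    [NormedAddCommGroup E] [InnerProductSpace ℝ E] [CompleteSpace E]
    [NormedAddCommGroup X] [InnerProductSpace ℝ X] [CompleteSpace X]
    [NormedAddCommGroup Φ] [InnerProductSpace ℝ Φ] [CompleteSpace Φ]
    (T : E → E) (ρ : ℝ) (hρ0 : 0 ≤ ρ)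
    (hlip : ∀ x y, ‖T x - T y‖ ≤ ρ * ‖x - y‖)
    (zstar : E) (hfix : T zstar = zstar)
    (z : ℕ → E) (hrec : ∀ k, z (k + 1) = T (z k))
    (d0 : ℝ) (hd0 : d0 = ‖z 0 - zstar‖)
    (a : E → X) (b : E → E) (J : E → X →L[ℝ] E) (Jstar : X →L[ℝ] E)
    (L_x L_z C_z L_T L_J σ_J σ_A C_g : ℝ)
    (hLx0 : 0 ≤ L_x) (hLz0 : 0 ≤ L_z)
    (hLJ0 : 0 ≤ L_J) (hCg0 : 0 < C_g)
    (ha : ∀ w w', ‖a w - a w'‖ ≤ L_x * ‖w - w'‖)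
    (hb : ∀ w w', ‖b w - b w'‖ ≤ L_z * ‖w - w'‖)
    (hbbd : ∀ w, ‖b w‖ ≤ C_z)
    (hJ : ∀ w, ‖J (T w) - Jstar‖ ≤ ρ * L_T / (1 - ρ) + L_J * ‖w - zstar‖)
    (hJstar : ‖Jstar‖ ≤ σ_J)
    (A : Φ →L[ℝ] X) (hA : ‖A‖ ≤ σ_A)
    (v : E → X) (hv : ∀ w, v w = a w + (J w).adjoint (b w))
    (vstar : X) (hvstar : vstar = a zstar + Jstar.adjoint (b zstar))
    (gstar : Φ) (hgstar : gstar = A.adjoint vstar)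
    (hCg : C_g ≤ ‖gstar‖)
    (k : ℕ) (ghat : Φ) (hghat : ghat = A.adjoint (v (z (k + 1))))
    (εk : ℝ)
    (hεk : εk = (σ_A / C_g) * (ρ * L_T * C_z / (1 - ρ) +
      ρ ^ k * d0 * (ρ * (L_x + L_z * σ_J) + C_z * L_J)))
    (hεk1 : εk < 1) :
    ⟪gstar, ghat⟫ / (‖gstar‖ * ‖ghat‖) ≥ (1 - εk) / (1 + εk) ∧ (0 : ℝ) < (1 - εk) / (1 + εk) := by
  have hzk : ‖z k - zstar‖ ≤ ρ ^ k * d0 :=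
    hd0 ▸ norm_sub_fixedPoint_le_pow_mul hρ0 hlip hfix hrec k
  have hΔv : ‖v (z (k + 1)) - vstar‖ ≤
      ρ * L_T * C_z / (1 - ρ) + ρ ^ k * d0 * (ρ * (L_x + L_z * σ_J) + C_z * L_J) := by
    rw [hrec, hv, hvstar, ← div_mul_eq_mul_div]
    exact norm_add_adjoint_sub_le_of_contraction_step hρ0 hlip hfix hLx0 hLz0 hLJ0 ha hb hbbd hJ hJstar hzk
  have hΔg : ‖ghat - gstar‖ ≤ εk * ‖gstar‖ := by
    have hσA0 : 0 ≤ σ_A := (norm_nonneg A).trans hA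
    calc ‖ghat - gstar‖ ≤ ‖A‖ * ‖v (z (k + 1)) - vstar‖ := by
          rw [hghat, hgstar, ← map_sub]; exact A.norm_adjoint_apply_le _
      _ ≤ εk * C_g := by
          rw [hεk, mul_right_comm, div_mul_cancel₀ _ hCg0.ne']
          gcongr
      _ ≤ εk * ‖gstar‖ := by
          gcongr
          rw [hεk]
          exact mul_nonneg (div_nonneg hσA0 hCg0.le) ((norm_nonneg _).trans hΔv)
  have hg : 0 < ‖gstar‖ := hCg0.trans_le hCg
  have hε0 : 0 ≤ εk := nonneg_of_mul_nonneg_left ((norm_nonneg _).trans hΔg) hg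
  refine ⟨?_, div_pos (by linarith) (by linarith)⟩
  rw [ge_iff_le, ← InnerProductGeometry.cos_angle]
  exact cos_angle_ge_of_norm_sub_le (norm_pos_iff.mp hg) hεk1 hΔg

theorem stmt_11 {E X Φ : Type*}
    [NormedAddCommGroup E] [InnerProductSpace ℝ E] [CompleteSpace E]
    [NormedAddCommGroup X] [InnerProductSpace ℝ X] [CompleteSpace X]
    [NormedAddCommGroup Φ] [InnerProductSpace ℝ Φ] [CompleteSpace Φ]
    (T : E → E) (ρ : ℝ) (hρ0 : 0 ≤ ρ) (hρ1 : ρ < 1)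
    (hlip : ∀ x y, ‖T x - T y‖ ≤ ρ * ‖x - y‖)
    (zstar : E) (hfix : T zstar = zstar)
    (z : ℕ → E) (hrec : ∀ k, z (k + 1) = T (z k))
    (d0 : ℝ) (hd0 : d0 = ‖z 0 - zstar‖)
    (a : E → X) (b : E → E) (J : E → X →L[ℝ] E) (Jstar : X →L[ℝ] E)
    (L_x L_z C_z L_T L_J σ_J σ_A C_g : ℝ)
    (hLx0 : 0 ≤ L_x) (hLz0 : 0 ≤ L_z) (hCz0 : 0 ≤ C_z) (hLT0 : 0 ≤ L_T)
    (hLJ0 : 0 ≤ L_J) (hσJ0 : 0 ≤ σ_J) (hCg0 : 0 < C_g)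
    (ha : ∀ w w', ‖a w - a w'‖ ≤ L_x * ‖w - w'‖)
    (hb : ∀ w w', ‖b w - b w'‖ ≤ L_z * ‖w - w'‖)
    (hbbd : ∀ w, ‖b w‖ ≤ C_z)
    (hJ : ∀ w, ‖J (T w) - Jstar‖ ≤ ρ * L_T / (1 - ρ) + L_J * ‖w - zstar‖)
    (hJstar : ‖Jstar‖ ≤ σ_J)
    (A : Φ →L[ℝ] X) (hA : ‖A‖ ≤ σ_A)
    (v : E → X) (hv : ∀ w, v w = a w + (J w).adjoint (b w))
    (vstar : X) (hvstar : vstar = a zstar + Jstar.adjoint (b zstar))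
    (gstar : Φ) (hgstar : gstar = A.adjoint vstar)
    (hCg : C_g ≤ ‖gstar‖)
    (k : ℕ) (ghat : Φ) (hghat : ghat = A.adjoint (v (z (k + 1))))
    (εk : ℝ)
    (hεk : εk = (σ_A / C_g) * (ρ * L_T * C_z / (1 - ρ) +
      ρ ^ k * d0 * (ρ * (L_x + L_z * σ_J) + C_z * L_J)))
    (hεk1 : εk < 1) :
    ⟪gstar, ghat⟫ / (‖gstar‖ * ‖ghat‖) ≥ (1 - εk) / (1 + εk) ∧ (0 : ℝ) < (1 - εk) / (1 + εk) :=
  stmt_11_general T ρ hρ0 hlip zstar hfix z hrec d0 hd0 a b J Jstar L_x L_z C_z L_T L_J σ_J σ_A C_g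
    hLx0 hLz0 hLJ0 hCg0 ha hb hbbd hJ hJstar A hA v hv vstar hvstar gstar hgstar hCg k ghat hghat εk
    hεk hεk1
end
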